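/- arXiv:1505.03006 — 2 statements merged into one kernel-verified Lean document; each statement's English description precedes it below -/
import Mathlib

section
/- Let T : ℝ₊^N → ℝ₊₊^N be a positive concave mapping with a fixed point x* (T(x*) = x*), whose lower bounding matrix M satisfies ρ(M) < 1, and let T_A(x) := (I − M)⁻¹·(T(x) − M·x) be its accelerated mapping. Then the sequence of iterates (T_A^n(0))_{n∈ℕ} converges faster to x* than (T^n(0))_{n∈ℕ}: for every n ∈ ℕ, ‖T_A^n(0) − x*‖_∞ ≤ ‖T^n(0) − x*‖_∞. -/
open Matrix Filter Topology

noncomputable section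

/-- `g` is a supergradient of `f` at `x`: the supergradient inequality holds for all
points `y` in the nonnegative orthant. -/
def IsSupergrad {N : ℕ} (f : (Fin N → ℝ) → ℝ) (x g : Fin N → ℝ) : Prop :=
  ∀ y : Fin N → ℝ, 0 ≤ y → f y ≤ f x + ∑ i, g i * (y i - x i)

/-- `M` is the lower bounding matrix of the positive concave mapping with components `f i`:
`M i k` is the infimum of the `k`-th components of all supergradients of `f i` at points of
the nonnegative orthant. -/
def IsLBM {N : ℕ} (f : Fin N → (Fin N → ℝ) → ℝ) (M : Matrix (Fin N) (Fin N) ℝ) : Prop :=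
  ∀ i k, M i k =
    sInf {t : ℝ | ∃ x : Fin N → ℝ, 0 ≤ x ∧ ∃ g : Fin N → ℝ, IsSupergrad (f i) x g ∧ g k = t}

/-- The spectral radius of a real matrix: the supremum of the moduli of its complex
eigenvalues. -/
def specRad {N : ℕ} (M : Matrix (Fin N) (Fin N) ℝ) : ENNReal :=
  spectralRadius ℂ (M.map (algebraMap ℝ ℂ))

/-!
Positivity and concavity of the `fᵢ` make `T` monotone on the orthant and give the lower bound
`T x + M (y - x) ≤ T y` for `0 ≤ x ≤ y` with `y > 0`: take a supergradient at `y`, which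
dominates `M` entrywise. Since `ρ(M) < 1`, the Neumann series `∑ Mⁿ` converges to `(1 - M)⁻¹`,
which is therefore entrywise nonnegative. For `uₙ = T_Aⁿ(0)` and `aₙ = Tⁿ(0)` the identity
`uₙ₊₁ = T uₙ + M (uₙ₊₁ - uₙ)` and these two facts give, by induction, `aₙ ≤ uₙ ≤ T uₙ` and
`uₙ ≤ x*`: both sequences increase to `x*` from below, and `uₙ` is the closer one.
-/

theorem ConcaveOn.monotoneOn_of_nonneg {E : Type*} [AddCommGroup E] [PartialOrder E]
    [IsOrderedAddMonoid E] [Module ℝ E] [PosSMulMono ℝ E] {f : E → ℝ}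
    (hf : ConcaveOn ℝ {x | 0 ≤ x} f) (hf₀ : ∀ x, 0 ≤ x → 0 ≤ f x) :
    MonotoneOn f {x | 0 ≤ x} := by
  intro x hx y _ hxy
  have h_ray : ∀ s ∈ Set.Ioo (0 : ℝ) 1, (1 - s) * f x ≤ f y := by
    rintro s ⟨hs₀, hs₁⟩
    set w := x + s⁻¹ • (y - x)
    have hw : 0 ≤ w := add_nonneg hx (smul_nonneg (inv_nonneg.2 hs₀.le) (sub_nonneg.2 hxy))
    have hy_eq : s • w + (1 - s) • x = y := by
      simp only [w, smul_add, smul_smul, mul_inv_cancel₀ hs₀.ne', one_smul]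
      module
    have := hf.2 hw hx hs₀.le (sub_nonneg.2 hs₁.le) (add_sub_cancel s 1)
    rw [hy_eq, smul_eq_mul, smul_eq_mul] at this
    linarith [mul_nonneg hs₀.le (hf₀ w hw)]
  have h_lim : Tendsto (fun s : ℝ => (1 - s) * f x) (𝓝[>] 0) (𝓝 (f x)) := by
    have : Continuous fun s : ℝ => (1 - s) * f x := by fun_prop
    simpa using (this.tendsto 0).mono_left nhdsWithin_le_nhds
  exact le_of_tendsto h_lim (mem_of_superset (Ioo_mem_nhdsGT one_pos) h_ray)

section Supergradient

variable {E : Type*} [NormedAddCommGroup E] [NormedSpace ℝ E] [FiniteDimensional ℝ E]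
  {f : E → ℝ}

theorem ConcaveOn.exists_supergradient_of_isOpen {U : Set E} (hU : IsOpen U)
    (hf : ConcaveOn ℝ U f) {z : E} (hz : z ∈ U) :
    ∃ φ : StrongDual ℝ E, ∀ y ∈ U, f y ≤ f z + φ (y - z) := by
  set A := {p : E × ℝ | p.1 ∈ U ∧ p.2 < f p.1}
  have hA_open : IsOpen A := by
    have hcont : ContinuousOn (fun p : E × ℝ => f p.1 - p.2) (U ×ˢ Set.univ) :=
      ((hf.continuousOn hU).comp continuousOn_fst fun p hp => hp.1).sub continuousOn_snd
    convert hcont.isOpen_inter_preimage (hU.prod isOpen_univ) (isOpen_Ioi (a := 0)) using 1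
    ext p
    simp [A]
  -- separate `(z, f z)` from the open strict hypograph `A`; normalising the separating
  -- functional by its vertical component `b > 0` gives the supergradient
  obtain ⟨φ, hφ⟩ := geometric_hahn_banach_open_point hf.convex_strict_hypograph hA_open
    (x := (z, f z)) (fun h => lt_irrefl _ h.2)
  have hsplit : ∀ y t, φ (y, t) = φ (y, 0) + t * φ (0, 1) := fun y t => by
    rw [← smul_eq_mul, ← map_smul, ← map_add]
    simp
  set b := φ (0, 1)
  have hb : 0 < b := by
    have := hφ (z, f z - 1) ⟨hz, sub_one_lt _⟩
    rw [hsplit z, hsplit z (f z)] at this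
    linarith
  refine ⟨-b⁻¹ • φ.comp (ContinuousLinearMap.inl ℝ E ℝ),
    fun y hy => le_of_forall_lt fun t ht => ?_⟩
  have := hφ (y, t) ⟨hy, ht⟩
  rw [hsplit y, hsplit z] at this
  have hlin : φ (y - z, 0) = φ (y, 0) - φ (z, 0) := by
    rw [← map_sub, Prod.mk_sub_mk, sub_zero]
  simp only [FunLike.coe_smul, Pi.smul_apply, ContinuousLinearMap.comp_apply,
    ContinuousLinearMap.inl_apply, smul_eq_mul, hlin]
  rw [← sub_lt_iff_lt_add', neg_mul, lt_neg, ← div_eq_inv_mul, div_lt_iff₀ hb]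
  linarith

theorem ConcaveOn.exists_supergradient {s : Set E} (hf : ConcaveOn ℝ s f) {z : E}
    (hz : z ∈ interior s) : ∃ φ : StrongDual ℝ E, ∀ y ∈ s, f y ≤ f z + φ (y - z) := by
  obtain ⟨φ, hφ⟩ := (hf.subset interior_subset hf.1.interior).exists_supergradient_of_isOpen
    isOpen_interior hz
  refine ⟨φ, fun y hy => ?_⟩
  have hmid := hf.2 hy (interior_subset hz) one_half_pos.le one_half_pos.le (add_halves 1)
  have hφmid := hφ _
    (hf.1.combo_self_interior_mem_interior hy hz one_half_pos.le one_half_pos (add_halves 1))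
  have : (1 / 2 : ℝ) • y + (1 / 2 : ℝ) • z - z = (1 / 2 : ℝ) • (y - z) := by module
  rw [this, map_smul, smul_eq_mul] at hφmid
  rw [smul_eq_mul, smul_eq_mul] at hmid
  linarith

end Supergradient

section Orthant

variable {N : ℕ}

theorem mem_interior_nonneg_of_pos {z : Fin N → ℝ} (hz : ∀ i, 0 < z i) :
    z ∈ interior {x : Fin N → ℝ | 0 ≤ x} := by
  refine interior_maximal (t := {x : Fin N → ℝ | ∀ i, 0 < x i}) (fun x hx i => (hx i).le) ?_ hz
  simpa only [Set.ofPred_forall] using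
    isOpen_iInter_of_finite fun i => isOpen_lt continuous_const (continuous_apply i)

theorem exists_isSupergrad {f : (Fin N → ℝ) → ℝ} (hf : ConcaveOn ℝ {x | 0 ≤ x} f)
    {z : Fin N → ℝ} (hz : ∀ i, 0 < z i) : ∃ g, IsSupergrad f z g := by
  obtain ⟨φ, hφ⟩ := hf.exists_supergradient (mem_interior_nonneg_of_pos hz)
  refine ⟨fun i => φ fun j => if i = j then 1 else 0, fun y hy => ?_⟩
  have := hφ y hy
  rw [← ContinuousLinearMap.coe_coe, LinearMap.pi_apply_eq_sum_univ] at this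
  simpa only [Pi.sub_apply, smul_eq_mul, mul_comm, ContinuousLinearMap.coe_coe] using this

theorem IsSupergrad.nonneg {f : (Fin N → ℝ) → ℝ} (hf₀ : ∀ x, 0 ≤ x → 0 ≤ f x)
    {x g : Fin N → ℝ} (hx : 0 ≤ x) (hg : IsSupergrad f x g) : 0 ≤ g := by
  intro k
  by_contra! hk
  rw [Pi.zero_apply] at hk
  -- moving far enough along the `k`-th axis would make `f` negative
  set t := (f x + 1) / -g k
  have ht : 0 ≤ t := div_nonneg (by linarith [hf₀ x hx]) (by linarith)
  have hy : 0 ≤ x + Pi.single k t := add_nonneg hx (Pi.single_nonneg.2 ht)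
  have := hg _ hy
  simp only [Pi.add_apply, add_sub_cancel_left, Pi.single_apply, mul_ite, mul_zero,
    Finset.sum_ite_eq', Finset.mem_univ, if_true] at this
  have hgt : -g k * t = f x + 1 := mul_div_cancel₀ _ (neg_ne_zero.2 hk.ne)
  linarith [hf₀ _ hy]

end Orthant

namespace IsLBM

variable {N : ℕ} {f : Fin N → (Fin N → ℝ) → ℝ} {M : Matrix (Fin N) (Fin N) ℝ}

theorem nonneg (hM : IsLBM f M) (hf₀ : ∀ i x, 0 ≤ x → 0 ≤ f i x) (i k : Fin N) :
    0 ≤ M i k := by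
  rw [hM i k]
  exact Real.sInf_nonneg fun _ ⟨_, hx, _, hg, hgk⟩ => hgk ▸ hg.nonneg (hf₀ i) hx k

theorem le_of_isSupergrad (hM : IsLBM f M) (hf₀ : ∀ i x, 0 ≤ x → 0 ≤ f i x) {i : Fin N}
    {x g : Fin N → ℝ} (hx : 0 ≤ x) (hg : IsSupergrad (f i) x g) (k : Fin N) : M i k ≤ g k := by
  rw [hM i k]
  exact csInf_le ⟨0, fun _ ⟨_, hx', _, hg', hgk⟩ => hgk ▸ hg'.nonneg (hf₀ i) hx' k⟩
    ⟨x, hx, g, hg, rfl⟩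

theorem add_mulVec_sub_le (hM : IsLBM f M) (hconc : ∀ i, ConcaveOn ℝ {x | 0 ≤ x} (f i))
    (hf₀ : ∀ i x, 0 ≤ x → 0 ≤ f i x) {x y : Fin N → ℝ} (hx : 0 ≤ x) (hxy : x ≤ y)
    (hy : ∀ k, 0 < y k) : (fun i => f i x) + M *ᵥ (y - x) ≤ fun i => f i y := by
  intro i
  obtain ⟨g, hg⟩ := exists_isSupergrad (hconc i) hy
  have hgx := hg x hx
  calc f i x + ∑ k, M i k * (y k - x k)
      ≤ f i x + ∑ k, g k * (y k - x k) := by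
        gcongr with k
        · exact sub_nonneg.2 (hxy k)
        · exact hM.le_of_isSupergrad hf₀ (hx.trans hxy) hg k
    _ ≤ f i y := by
        have : ∑ k, g k * (x k - y k) = -∑ k, g k * (y k - x k) := by
          rw [← Finset.sum_neg_distrib]; congr! 1 with k; ring
        linarith

end IsLBM

theorem summable_pow_of_spectralRadius_lt_one {A : Type*} [NormedRing A] [NormedAlgebra ℂ A]
    [CompleteSpace A] {a : A} (ha : spectralRadius ℂ a < 1) : Summable (a ^ ·) := by
  obtain ⟨r, har, hr1⟩ := exists_between ha
  have hr : r.toReal < 1 := ENNReal.toReal_lt_of_lt_ofReal (by simpa using hr1)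
  refine .of_norm_bounded_eventually_nat (summable_geometric_of_lt_one ENNReal.toReal_nonneg hr) ?_
  filter_upwards [(spectrum.pow_norm_pow_one_div_tendsto_nhds_spectralRadius a).eventually_lt_const
    har, eventually_ge_atTop 1] with n hn hn1
  have hn0 : n ≠ 0 := by omega
  have := (ENNReal.ofReal_lt_iff_lt_toReal (by positivity) hr1.ne_top).1 hn
  calc ‖a ^ n‖ = (‖a ^ n‖ ^ (1 / (n : ℝ))) ^ n := by
        rw [one_div, Real.rpow_inv_natCast_pow (norm_nonneg _) hn0]
    _ ≤ r.toReal ^ n := by gcongr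

namespace Matrix

section
attribute [local instance] Matrix.linftyOpNormedRing Matrix.linftyOpNormedAlgebra

theorem summable_pow_of_specRad_lt_one {N : ℕ} {M : Matrix (Fin N) (Fin N) ℝ}
    (hM : specRad M < 1) : Summable (M ^ ·) := by
  have : CompleteSpace (Matrix (Fin N) (Fin N) ℂ) := FiniteDimensional.complete ℂ _
  have hsum := summable_pow_of_spectralRadius_lt_one hM
  convert hsum.map Complex.reLm.mapMatrix (continuous_id.matrix_map Complex.continuous_re) using 1
  ext n : 1
  rw [Function.comp_apply, ← RingHom.mapMatrix_apply, ← map_pow, RingHom.mapMatrix_apply,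
    LinearMap.mapMatrix_apply, map_map]
  ext i j
  simp

end

variable {n : Type*} [Fintype n] {M : Matrix n n ℝ}

theorem mulVec_nonneg_of_nonneg (hM : ∀ i k, 0 ≤ M i k) {x : n → ℝ} (hx : 0 ≤ x) :
    0 ≤ M *ᵥ x := fun i =>
  (Finset.sum_nonneg fun k _ => mul_nonneg (hM i k) (hx k) : 0 ≤ ∑ k, M i k * x k)

theorem nonneg_of_nonneg_sub_mulVec [DecidableEq n] (hM : ∀ i k, 0 ≤ M i k)
    (hsum : Summable (M ^ ·)) {z : n → ℝ} (hz : 0 ≤ z - M *ᵥ z) : 0 ≤ z := by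
  -- `z = (∑ Mⁿ) (z - M z)`, and the Neumann series `∑ Mⁿ` is entrywise nonnegative
  have hz_eq : (∑' k, M ^ k) *ᵥ (z - M *ᵥ z) = z := by
    rw [mulVec_sub, mulVec_mulVec, ← sub_mulVec, ← mul_one_sub, hsum.tsum_pow_mul_one_sub,
      one_mulVec]
  rw [← hz_eq]
  refine mulVec_nonneg_of_nonneg (fun i j => ?_) hz
  exact (Pi.hasSum.1 (Pi.hasSum.1 hsum.hasSum i) j).nonneg fun k => pow_apply_nonneg hM k i j

end Matrix

theorem norm_sub_le_norm_sub_of_le_of_le {ι : Type*} [Fintype ι] {a u x : ι → ℝ} (hau : a ≤ u)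
    (hux : u ≤ x) : ‖u - x‖ ≤ ‖a - x‖ := by
  refine (pi_norm_le_iff_of_nonneg (norm_nonneg _)).2 fun i => le_trans ?_ (norm_le_pi_norm _ i)
  rw [Pi.sub_apply, Pi.sub_apply, Real.norm_of_nonpos (by linarith [hux i]),
    Real.norm_of_nonpos (by linarith [hau i, hux i])]
  linarith [hau i]

section Iteration

variable {n : Type*} [Fintype n] {T TA : (n → ℝ) → n → ℝ} {M : Matrix n n ℝ} {xstar : n → ℝ}

theorem accel_update_bounds (hM : ∀ i k, 0 ≤ M i k) (hM_inv : ∀ z, 0 ≤ z - M *ᵥ z → 0 ≤ z)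
    (hT_pos : ∀ x, 0 ≤ x → ∀ i, 0 < T x i)
    (hT_lower : ∀ x y, 0 ≤ x → x ≤ y → (∀ k, 0 < y k) → T x + M *ᵥ (y - x) ≤ T y)
    (hfix : T xstar = xstar) (hxstar : ∀ i, 0 < xstar i) {u v : n → ℝ} (hu : 0 ≤ u)
    (huT : u ≤ T u) (hux : u ≤ xstar) (hv : v - M *ᵥ v = T u - M *ᵥ u) :
    T u ≤ v ∧ v ≤ T v ∧ v ≤ xstar := by
  have hTuv : T u ≤ v := by
    refine sub_nonneg.1 (hM_inv _ ?_)
    have : v - T u - M *ᵥ (v - T u) = M *ᵥ (T u - u) := by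
      rw [mulVec_sub, mulVec_sub]; linear_combination hv
    exact this ▸ mulVec_nonneg_of_nonneg hM (sub_nonneg.2 huT)
  have hv_pos : ∀ i, 0 < v i := fun i => (hT_pos u hu i).trans_le (hTuv i)
  refine ⟨hTuv, ?_, sub_nonneg.1 (hM_inv _ ?_)⟩
  · calc v = T u + M *ᵥ (v - u) := by rw [mulVec_sub]; linear_combination hv
      _ ≤ T v := hT_lower u v hu (huT.trans hTuv) hv_pos
  · have : xstar - v - M *ᵥ (xstar - v) = T xstar - (T u + M *ᵥ (xstar - u)) := by
      rw [mulVec_sub, mulVec_sub]; linear_combination -hv - hfix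
    exact this ▸ sub_nonneg.2 (hT_lower u xstar hu hux hxstar)

theorem norm_accel_iterate_sub_le (hM : ∀ i k, 0 ≤ M i k)
    (hM_inv : ∀ z, 0 ≤ z - M *ᵥ z → 0 ≤ z) (hT_pos : ∀ x, 0 ≤ x → ∀ i, 0 < T x i)
    (hT_mono : MonotoneOn T {x | 0 ≤ x})
    (hT_lower : ∀ x y, 0 ≤ x → x ≤ y → (∀ k, 0 < y k) → T x + M *ᵥ (y - x) ≤ T y)
    (hfix : T xstar = xstar) (hxstar : ∀ i, 0 < xstar i)
    (hTA : ∀ x, TA x - M *ᵥ TA x = T x - M *ᵥ x) (m : ℕ) :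
    ‖TA^[m] 0 - xstar‖ ≤ ‖T^[m] 0 - xstar‖ := by
  have key : ∀ m, 0 ≤ T^[m] 0 ∧ T^[m] 0 ≤ TA^[m] 0 ∧ TA^[m] 0 ≤ T (TA^[m] 0) ∧
      TA^[m] 0 ≤ xstar := by
    intro m
    induction m with
    | zero => exact ⟨le_rfl, le_rfl, fun i => (hT_pos 0 le_rfl i).le, fun i => (hxstar i).le⟩
    | succ m ih =>
      obtain ⟨ha, hau, huT, hux⟩ := ih
      obtain ⟨hTuv, hvT, hvx⟩ :=
        accel_update_bounds hM hM_inv hT_pos hT_lower hfix hxstar (ha.trans hau) huT hux (hTA _)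
      rw [Function.iterate_succ_apply', Function.iterate_succ_apply']
      exact ⟨fun i => (hT_pos _ ha i).le, (hT_mono ha (ha.trans hau) hau).trans hTuv, hvT, hvx⟩
  obtain ⟨-, hau, -, hux⟩ := key m
  exact norm_sub_le_norm_sub_of_le_of_le hau hux

end Iteration

theorem accelerated_iterates_from_zero_faster_general {N : ℕ} (f : Fin N → (Fin N → ℝ) → ℝ)
    (hconc : ∀ i, ConcaveOn ℝ {x : Fin N → ℝ | 0 ≤ x} (f i))
    (hpos : ∀ i, ∀ x : Fin N → ℝ, 0 ≤ x → 0 < f i x)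
    (M : Matrix (Fin N) (Fin N) ℝ) (hM : IsLBM f M)
    (hrad : specRad M < 1)
    (T : (Fin N → ℝ) → (Fin N → ℝ)) (hT : ∀ x : Fin N → ℝ, T x = fun i => f i x)
    (xstar : Fin N → ℝ) (hxstar : 0 ≤ xstar) (hfix : T xstar = xstar)
    (TA : (Fin N → ℝ) → (Fin N → ℝ))
    (hTA : ∀ x : Fin N → ℝ, TA x = (1 - M)⁻¹ *ᵥ (T x - M *ᵥ x)) :
    ∀ n : ℕ, ‖TA^[n] 0 - xstar‖ ≤ ‖T^[n] 0 - xstar‖ := by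
  obtain rfl : T = fun x i => f i x := funext hT
  have hf₀ : ∀ i x, 0 ≤ x → 0 ≤ f i x := fun i x hx => (hpos i x hx).le
  have hM₀ := hM.nonneg hf₀
  have hsum := Matrix.summable_pow_of_specRad_lt_one hrad
  have hinv : (1 - M) * (1 - M)⁻¹ = 1 := by
    rw [Matrix.inv_eq_right_inv hsum.one_sub_mul_tsum_pow, hsum.one_sub_mul_tsum_pow]
  have hTA' : ∀ x, TA x - M *ᵥ TA x = (fun i => f i x) - M *ᵥ x := fun x => by
    have h1M : ∀ v, v - M *ᵥ v = (1 - M) *ᵥ v := fun v => by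
      rw [sub_mulVec, one_mulVec]
    rw [h1M, hTA, mulVec_mulVec, hinv, one_mulVec]
  exact norm_accel_iterate_sub_le hM₀ (fun _ => Matrix.nonneg_of_nonneg_sub_mulVec hM₀ hsum)
    (fun x hx i => hpos i x hx)
    (fun x hx y hy hxy i => (hconc i).monotoneOn_of_nonneg (hf₀ i) hx hy hxy)
    (fun x y hx hxy hy => hM.add_mulVec_sub_le hconc hf₀ hx hxy hy) hfix
    (fun i => hfix ▸ hpos i xstar hxstar) hTA'

/-- The accelerated iterates started from 0 converge faster to the fixed point than the
standard iterates started from 0, in the sup-norm sense. -/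
theorem accelerated_iterates_from_zero_faster {N : ℕ} (f : Fin N → (Fin N → ℝ) → ℝ)
    (hconc : ∀ i, ConcaveOn ℝ {x : Fin N → ℝ | 0 ≤ x} (f i))
    (husc : ∀ i, UpperSemicontinuousOn (f i) {x : Fin N → ℝ | 0 ≤ x})
    (hpos : ∀ i, ∀ x : Fin N → ℝ, 0 ≤ x → 0 < f i x)
    (M : Matrix (Fin N) (Fin N) ℝ) (hM : IsLBM f M)
    (hrad : specRad M < 1)
    (T : (Fin N → ℝ) → (Fin N → ℝ)) (hT : ∀ x : Fin N → ℝ, T x = fun i => f i x)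
    (xstar : Fin N → ℝ) (hxstar : 0 ≤ xstar) (hfix : T xstar = xstar)
    (TA : (Fin N → ℝ) → (Fin N → ℝ))
    (hTA : ∀ x : Fin N → ℝ, TA x = (1 - M)⁻¹ *ᵥ (T x - M *ᵥ x)) :
    ∀ n : ℕ, ‖TA^[n] 0 - xstar‖ ≤ ‖T^[n] 0 - xstar‖ :=
  accelerated_iterates_from_zero_faster_general f hconc hpos M hM hrad T hT xstar hxstar hfix TA hTA
end
end

section
/- Let T : ℝ₊^N → ℝ₊₊^N be a standard interference mapping with a fixed point x* ∈ ℝ₊₊^N (T(x*) = x*). Then: (i) for every x ∈ ℝ₊^N there exists α > 1 with x ≤ α·x* componentwise; (ii) for every α > 1, T(α·x*) < α·x* strictly componentwise, so the sequence (T^n(α·x*))_{n∈ℕ} is monotonically decreasing in each component; and (iii) for every x ∈ ℝ₊^N and α > 1 with x ≤ α·x*, the sandwich T^n(0) ≤ T^n(x) ≤ T^n(α·x*) holds componentwise for every n ∈ ℕ. -/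
open Matrix Filter Topology

noncomputable section

theorem exists_one_lt_le_smul_of_pos {ι 𝕜 : Type*} [Finite ι] [Field 𝕜] [LinearOrder 𝕜]
    [IsStrictOrderedRing 𝕜] (x : ι → 𝕜) {y : ι → 𝕜} (hy : ∀ i, 0 < y i) :
    ∃ α : 𝕜, 1 < α ∧ x ≤ α • y := by
  obtain ⟨c, hc⟩ := (Set.finite_range fun i => x i / y i).bddAbove
  refine ⟨max c 1 + 1, by linarith [le_max_right c 1], fun i => ?_⟩
  have hci : x i / y i ≤ max c 1 + 1 :=
    (hc ⟨i, rfl⟩).trans ((le_max_left c 1).trans (le_add_of_nonneg_right zero_le_one))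
  simpa only [Pi.smul_apply, smul_eq_mul] using (div_le_iff₀ (hy i)).1 hci

namespace MonotoneOn

variable {α : Type*} [Preorder α] {f : α → α} {s : Set α}

theorem iterate (hf : MonotoneOn f s) (hs : Set.MapsTo f s s) (n : ℕ) :
    MonotoneOn f^[n] s := by
  induction n with
  | zero => exact monotoneOn_id
  | succ n ih =>
    intro a ha b hb hab
    rw [Function.iterate_succ_apply, Function.iterate_succ_apply]
    exact ih (hs ha) (hs hb) (hf ha hb hab)

theorem iterate_succ_apply_le_of_map_le (hf : MonotoneOn f s) (hs : Set.MapsTo f s s)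
    {x : α} (hx : x ∈ s) (hfx : f x ≤ x) (n : ℕ) : f^[n + 1] x ≤ f^[n] x := by
  rw [Function.iterate_succ_apply]
  exact hf.iterate hs n (hs hx) hx hfx

end MonotoneOn

/-- Standard interference mappings with a strictly positive fixed point: any nonnegative
point can be dominated by a multiple of the fixed point, the iterates from α·x* decrease,
and the iterates from any point are sandwiched between iterates from 0 and from α·x*. -/
theorem interference_iterates_sandwich {N : ℕ} (T : (Fin N → ℝ) → (Fin N → ℝ))
    (hposT : ∀ x : Fin N → ℝ, 0 ≤ x → ∀ i, 0 < T x i)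
    (hscal : ∀ x : Fin N → ℝ, 0 ≤ x → ∀ α : ℝ, 1 < α → ∀ i, T (α • x) i < α * T x i)
    (hmono : ∀ x y : Fin N → ℝ, 0 ≤ x → 0 ≤ y → x ≤ y → T x ≤ T y)
    (xstar : Fin N → ℝ) (hxpos : ∀ i, 0 < xstar i) (hfix : T xstar = xstar) :
    (∀ x : Fin N → ℝ, 0 ≤ x → ∃ α : ℝ, 1 < α ∧ x ≤ α • xstar) ∧
    (∀ α : ℝ, 1 < α →
      (∀ i, T (α • xstar) i < α * xstar i) ∧
      (∀ n : ℕ, T^[n + 1] (α • xstar) ≤ T^[n] (α • xstar))) ∧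
    (∀ (x : Fin N → ℝ) (α : ℝ), 0 ≤ x → 1 < α → x ≤ α • xstar →
      ∀ n : ℕ, T^[n] 0 ≤ T^[n] x ∧ T^[n] x ≤ T^[n] (α • xstar)) := by
  have hmaps : Set.MapsTo T (Set.Ici 0) (Set.Ici 0) := fun x hx i => (hposT x hx i).le
  have hmonoOn : MonotoneOn T (Set.Ici 0) := fun x hx y hy hxy => hmono x y hx hy hxy
  have hxnn : 0 ≤ xstar := fun i => (hxpos i).le
  have hαnn : ∀ α : ℝ, 1 < α → 0 ≤ α • xstar := fun α hα => smul_nonneg (by linarith) hxnn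
  refine ⟨fun x _ => exists_one_lt_le_smul_of_pos x hxpos, fun α hα => ?_,
    fun x α hx hα hxα n => ?_⟩
  · have hstep : ∀ i, T (α • xstar) i < α * xstar i := by
      simpa only [hfix] using hscal xstar hxnn α hα
    exact ⟨hstep, hmonoOn.iterate_succ_apply_le_of_map_le hmaps (hαnn α hα)
      fun i => (hstep i).le⟩
  · exact ⟨hmonoOn.iterate hmaps n Set.self_mem_Ici hx hx,
      hmonoOn.iterate hmaps n hx (hαnn α hα) hxα⟩
end
end
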